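/- Let a ∈ ℝ with a ∉ {0, 1}, M := {(z¹, z²) ∈ ℂ² : |Re z¹| < 1 and |z²| < 1}, and ρ_a(z¹, z²) := 2(Re z¹ + 1)^a (Re z² + 1)^{1−a}. Then at every point of M the two vectors (ρ_{11̄}, ρ_{21̄}) and (ρ_{11̄1̄}, ρ_{21̄1̄}) in ℂ² are linearly independent over ℂ; here ρ_{jk̄} := ∂²ρ_a/∂z^j∂z̄^k and ρ_{jk̄l̄} := ∂³ρ_a/∂z^j∂z̄^k∂z̄^l are iterated Wirtinger derivatives. -/

import Mathlib

/-!
`ρ_a` depends only on `x = Re z¹ + 1` and `u = Re z² + 1`, so on it and on all its derivatives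
both `∂/∂z^j` and `∂/∂z̄^j` act as `½ ∂/∂x^j`, turning the monomial `c x^p u^q` into another
monomial. This gives
`ρ_{11̄} = a(a-1)/2 · x^{a-2} u^{1-a}`, `ρ_{21̄} = a(1-a)/2 · x^{a-1} u^{-a}`,
`ρ_{11̄1̄} = a(a-1)(a-2)/4 · x^{a-3} u^{1-a}`, `ρ_{21̄1̄} = a(1-a)(a-1)/4 · x^{a-2} u^{-a}`,
so the determinant of the two vectors is `-a²(a-1)²/8 · x^{2a-4} u^{1-2a}`, which vanishes
nowhere on `M` (where `x, u > 0`) when `a ∉ {0, 1}`.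
-/

/-- Wirtinger derivative `∂f/∂z^j`. -/
noncomputable def wD {n : ℕ} (f : (Fin n → ℂ) → ℂ) (j : Fin n) (x : Fin n → ℂ) : ℂ :=
  (fderiv ℝ f x (Pi.single j 1) - Complex.I * fderiv ℝ f x (Pi.single j Complex.I)) / 2

/-- Wirtinger derivative `∂f/∂z̄^j`. -/
noncomputable def wDbar {n : ℕ} (f : (Fin n → ℂ) → ℂ) (j : Fin n) (x : Fin n → ℂ) : ℂ :=
  (fderiv ℝ f x (Pi.single j 1) + Complex.I * fderiv ℝ f x (Pi.single j Complex.I)) / 2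

/-- Iterated Wirtinger derivative `f_{jk̄} = ∂²f/∂z^j∂z̄^k`. -/
noncomputable def w2 {n : ℕ} (f : (Fin n → ℂ) → ℂ) (j k : Fin n) (x : Fin n → ℂ) : ℂ :=
  wD (fun y => wDbar f k y) j x

/-- Iterated Wirtinger derivative `f_{jk̄l̄} = ∂³f/∂z^j∂z̄^k∂z̄^l`. -/
noncomputable def w3 {n : ℕ} (f : (Fin n → ℂ) → ℂ) (j k l : Fin n) (x : Fin n → ℂ) : ℂ :=
  wDbar (fun y => w2 f j k y) l x

/-- The potential `ρ_a(z) = 2(Re z¹ + 1)^a (Re z² + 1)^{1−a}` (real powers). -/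
noncomputable def rhoA (a : ℝ) (z : Fin 2 → ℂ) : ℝ :=
  2 * ((z 0).re + 1) ^ a * ((z 1).re + 1) ^ (1 - a)

/-- `ρ_a` as a complex-valued function. -/
noncomputable def rhoAC (a : ℝ) : (Fin 2 → ℂ) → ℂ := fun z => ((rhoA a z : ℝ) : ℂ)

/-- The domain `M = {|Re z¹| < 1, |z²| < 1}`. -/
def MSet : Set (Fin 2 → ℂ) := {z | |(z 0).re| < 1 ∧ ‖z 1‖ < 1}

open Complex Filter Topology

section Wirtinger

variable {n : ℕ} {f g : (Fin n → ℂ) → ℂ} {j : Fin n} {x : Fin n → ℂ}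

theorem wD_congr (h : f =ᶠ[𝓝 x] g) : wD f j x = wD g j x := by
  rw [wD, wD, h.fderiv_eq]

theorem wDbar_congr (h : f =ᶠ[𝓝 x] g) : wDbar f j x = wDbar g j x := by
  rw [wDbar, wDbar, h.fderiv_eq]

theorem wD_of_fderiv_I_eq_zero (h : fderiv ℝ f x (Pi.single j I) = 0) :
    wD f j x = fderiv ℝ f x (Pi.single j 1) / 2 := by
  rw [wD, h, mul_zero, sub_zero]

theorem wDbar_of_fderiv_I_eq_zero (h : fderiv ℝ f x (Pi.single j I) = 0) :
    wDbar f j x = fderiv ℝ f x (Pi.single j 1) / 2 := by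
  rw [wDbar, h, mul_zero, add_zero]

end Wirtinger

theorem linearIndependent_pair_of_det_ne_zero {K : Type*} [Field K] {u v : Fin 2 → K}
    (h : u 0 * v 1 - u 1 * v 0 ≠ 0) : LinearIndependent K ![u, v] := by
  have : (Matrix.of ![u, v]).det ≠ 0 := by simpa [Matrix.det_fin_two] using h
  exact Matrix.linearIndependent_rows_iff_isUnit.mpr
    ((Matrix.isUnit_iff_isUnit_det _).mpr (isUnit_iff_ne_zero.mpr this))

def reGtNegOne : Set (Fin 2 → ℂ) := {z | ∀ i, -1 < (z i).re}

theorem isOpen_reGtNegOne : IsOpen reGtNegOne := by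
  rw [reGtNegOne, Set.ofPred_forall]
  exact isOpen_iInter_of_finite fun i => isOpen_lt continuous_const (by fun_prop)

theorem MSet_subset_reGtNegOne : MSet ⊆ reGtNegOne := by
  intro z ⟨h0, h1⟩ i
  fin_cases i
  · exact (abs_lt.mp h0).1
  · exact (abs_lt.mp ((abs_re_le_norm _).trans_lt h1)).1

noncomputable def reMonomial (c p q : ℝ) (z : Fin 2 → ℂ) : ℂ :=
  ((c * ((z 0).re + 1) ^ p * ((z 1).re + 1) ^ q : ℝ) : ℂ)

theorem rhoAC_eq_reMonomial (a : ℝ) : rhoAC a = reMonomial 2 a (1 - a) := rfl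

section reMonomial

variable {c p q : ℝ} {z : Fin 2 → ℂ}

theorem fderiv_reMonomial_apply (hz : z ∈ reGtNegOne) (v : Fin 2 → ℂ) :
    fderiv ℝ (reMonomial c p q) z v = ((c * (
      p * ((z 0).re + 1) ^ (p - 1) * ((z 1).re + 1) ^ q * (v 0).re +
      q * ((z 0).re + 1) ^ p * ((z 1).re + 1) ^ (q - 1) * (v 1).re) : ℝ) : ℂ) := by
  have hpow (i : Fin 2) (r : ℝ) : HasFDerivAt (fun z : Fin 2 → ℂ => ((z i).re + 1) ^ r)
      ((r * ((z i).re + 1) ^ (r - 1)) • reCLM.comp (.proj i)) z := by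
    have hne : (z i).re + 1 ≠ 0 := by linarith [hz i]
    exact (Real.hasDerivAt_rpow_const (Or.inl hne)).comp_hasFDerivAt
      (f := fun z : Fin 2 → ℂ => (z i).re + 1) z
      ((reCLM.comp (.proj i : (Fin 2 → ℂ) →L[ℝ] ℂ)).hasFDerivAt.add_const 1)
  have hderiv : HasFDerivAt (reMonomial c p q) _ z :=
    ofRealCLM.hasFDerivAt.comp z (((hpow 0 p).const_mul c).mul (hpow 1 q))
  rw [hderiv.fderiv]
  simp only [ContinuousLinearMap.comp_apply, add_apply, smul_apply,
    ContinuousLinearMap.proj_apply, reCLM_apply, ofRealCLM_apply, smul_eq_mul]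
  push_cast
  ring

theorem fderiv_reMonomial_single_I (hz : z ∈ reGtNegOne) (i : Fin 2) :
    fderiv ℝ (reMonomial c p q) z (Pi.single i I) = 0 := by
  fin_cases i <;> simp [fderiv_reMonomial_apply hz]

theorem fderiv_reMonomial_single_zero (hz : z ∈ reGtNegOne) :
    fderiv ℝ (reMonomial c p q) z (Pi.single 0 1) / 2 = reMonomial (c * p / 2) (p - 1) q z := by
  rw [fderiv_reMonomial_apply hz, reMonomial]
  simp only [Pi.single_eq_same, Pi.single_eq_of_ne one_ne_zero, one_re, zero_re]
  push_cast
  ring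

theorem fderiv_reMonomial_single_one (hz : z ∈ reGtNegOne) :
    fderiv ℝ (reMonomial c p q) z (Pi.single 1 1) / 2 = reMonomial (c * q / 2) p (q - 1) z := by
  rw [fderiv_reMonomial_apply hz, reMonomial]
  simp only [Pi.single_eq_same, Pi.single_eq_of_ne zero_ne_one, one_re, zero_re]
  push_cast
  ring

theorem wD_reMonomial_zero (hz : z ∈ reGtNegOne) :
    wD (reMonomial c p q) 0 z = reMonomial (c * p / 2) (p - 1) q z := by
  rw [wD_of_fderiv_I_eq_zero (fderiv_reMonomial_single_I hz 0), fderiv_reMonomial_single_zero hz]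

theorem wD_reMonomial_one (hz : z ∈ reGtNegOne) :
    wD (reMonomial c p q) 1 z = reMonomial (c * q / 2) p (q - 1) z := by
  rw [wD_of_fderiv_I_eq_zero (fderiv_reMonomial_single_I hz 1), fderiv_reMonomial_single_one hz]

theorem wDbar_reMonomial_zero (hz : z ∈ reGtNegOne) :
    wDbar (reMonomial c p q) 0 z = reMonomial (c * p / 2) (p - 1) q z := by
  rw [wDbar_of_fderiv_I_eq_zero (fderiv_reMonomial_single_I hz 0), fderiv_reMonomial_single_zero hz]

theorem reMonomial_mul (hz : z ∈ reGtNegOne) (c' p' q' : ℝ) :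
    reMonomial c p q z * reMonomial c' p' q' z = reMonomial (c * c') (p + p') (q + q') z := by
  have hpos (i : Fin 2) : 0 < (z i).re + 1 := by linarith [hz i]
  simp only [reMonomial, ← ofReal_mul, Real.rpow_add (hpos 0), Real.rpow_add (hpos 1)]
  congr 1
  ring

theorem reMonomial_sub (c' : ℝ) :
    reMonomial c p q z - reMonomial c' p q z = reMonomial (c - c') p q z := by
  simp only [reMonomial]
  push_cast
  ring

theorem reMonomial_ne_zero (hz : z ∈ reGtNegOne) (hc : c ≠ 0) : reMonomial c p q z ≠ 0 := by
  have hpos (i : Fin 2) : 0 < (z i).re + 1 := by linarith [hz i]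
  rw [reMonomial, ofReal_ne_zero]
  exact mul_ne_zero (mul_ne_zero hc (Real.rpow_pos_of_pos (hpos 0) p).ne')
    (Real.rpow_pos_of_pos (hpos 1) q).ne'

end reMonomial

section rhoAC

variable {a : ℝ}

theorem wDbar_rhoAC_zero :
    Set.EqOn (wDbar (rhoAC a) 0) (reMonomial a (a - 1) (1 - a)) reGtNegOne := by
  intro z hz
  rw [rhoAC_eq_reMonomial, wDbar_reMonomial_zero hz]
  ring_nf

theorem w2_rhoAC_zero_zero :
    Set.EqOn (w2 (rhoAC a) 0 0) (reMonomial (a * (a - 1) / 2) (a - 2) (1 - a)) reGtNegOne := by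
  intro z hz
  rw [w2, wD_congr (wDbar_rhoAC_zero.eventuallyEq_of_mem (isOpen_reGtNegOne.mem_nhds hz)),
    wD_reMonomial_zero hz]
  ring_nf

theorem w2_rhoAC_one_zero :
    Set.EqOn (w2 (rhoAC a) 1 0) (reMonomial (a * (1 - a) / 2) (a - 1) (-a)) reGtNegOne := by
  intro z hz
  rw [w2, wD_congr (wDbar_rhoAC_zero.eventuallyEq_of_mem (isOpen_reGtNegOne.mem_nhds hz)),
    wD_reMonomial_one hz]
  ring_nf

theorem w3_rhoAC_zero_zero_zero :
    Set.EqOn (w3 (rhoAC a) 0 0 0)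
      (reMonomial (a * (a - 1) * (a - 2) / 4) (a - 3) (1 - a)) reGtNegOne := by
  intro z hz
  rw [w3, wDbar_congr (w2_rhoAC_zero_zero.eventuallyEq_of_mem (isOpen_reGtNegOne.mem_nhds hz)),
    wDbar_reMonomial_zero hz]
  ring_nf

theorem w3_rhoAC_one_zero_zero :
    Set.EqOn (w3 (rhoAC a) 1 0 0)
      (reMonomial (a * (1 - a) * (a - 1) / 4) (a - 2) (-a)) reGtNegOne := by
  intro z hz
  rw [w3, wDbar_congr (w2_rhoAC_one_zero.eventuallyEq_of_mem (isOpen_reGtNegOne.mem_nhds hz)),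
    wDbar_reMonomial_zero hz]
  ring_nf

end rhoAC

/-- 2-nondegeneracy of the pre-Kähler structures with potentials `ρ_a`, `a ∉ {0,1}`:
the vectors `(ρ_{11̄}, ρ_{21̄})` and `(ρ_{11̄1̄}, ρ_{21̄1̄})` are linearly independent over ℂ
at every point of `M`. -/
theorem stmt8 (a : ℝ) (ha0 : a ≠ 0) (ha1 : a ≠ 1) (z : Fin 2 → ℂ) (hz : z ∈ MSet) :
    LinearIndependent ℂ
      ![![w2 (rhoAC a) 0 0 z, w2 (rhoAC a) 1 0 z],
        ![w3 (rhoAC a) 0 0 0 z, w3 (rhoAC a) 1 0 0 z]] := by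
  have hz' := MSet_subset_reGtNegOne hz
  have hdet : a * (a - 1) / 2 * (a * (1 - a) * (a - 1) / 4) -
      a * (1 - a) / 2 * (a * (a - 1) * (a - 2) / 4) = -(a * (a - 1)) ^ 2 / 8 := by ring
  have hc : -(a * (a - 1)) ^ 2 / 8 ≠ 0 :=
    div_ne_zero (neg_ne_zero.mpr (pow_ne_zero 2 (mul_ne_zero ha0 (sub_ne_zero.mpr ha1))))
      (by norm_num)
  apply linearIndependent_pair_of_det_ne_zero
  simp only [Matrix.cons_val_zero, Matrix.cons_val_one]
  rw [w2_rhoAC_zero_zero hz', w2_rhoAC_one_zero hz', w3_rhoAC_zero_zero_zero hz',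
    w3_rhoAC_one_zero_zero hz', reMonomial_mul hz', reMonomial_mul hz',
    show a - 1 + (a - 3) = a - 2 + (a - 2) by ring, show -a + (1 - a) = 1 - a + -a by ring,
    reMonomial_sub, hdet]
  exact reMonomial_ne_zero hz' hc
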